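/- arXiv:2204.01445 — 3 statements merged into one kernel-verified Lean document; each statement's English description precedes it below -/
import Mathlib

section
/- For all f, g ∈ G^1 and every nonempty word w = a_1⋯a_n, the coefficient of the shifted composition is given by (f • g)(w) = Σ_{S ⊆ {1,…,n}} f(w_S) ∏_{i=1}^{m(S)} g(w_{J_i^S}), where the sum runs over all subsets S (including S = ∅, with f(w_∅) := f(∅) = 1, and S = {1,…,n}, with empty product equal to 1). In other words, the map sending an A-valued character φ of the word Hopf algebra H (with deconcatenation-type coproduct Δ(a_1⋯a_n) = Σ_{S⊆[n]} w_S ⊗ w_{J_1^S}|⋯|w_{J_m^S}) to its generating series is a group isomorphism from the character group of H with convolution onto (G^1, •). -/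
/-- Words over the alphabet of positive integers. -/
abbrev Word : Type := List ℕ+

variable {A : Type*}

/-- The constant series `1`: coefficient `1` on the empty word, `0` elsewhere. -/
def one [CommRing A] : Word → A := fun w => if w = [] then 1 else 0

/-- Cauchy product of noncommutative series:
`(f·g)(w) = Σ f(u) g(v)` over all factorizations `w = u ++ v`. -/
def cauchy [CommRing A] (f g : Word → A) : Word → A := fun w =>
  ∑ k ∈ Finset.range (w.length + 1), f (w.take k) * g (w.drop k)

/-- The subword of `w` consisting of the letters at positions in `S` (in increasing order). -/
def subword (w : Word) (S : Finset ℕ) : Word :=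
  ((w.zipIdx.map Prod.swap).filter (fun p => decide (p.1 ∈ S))).map Prod.snd

/-- The (possibly empty) factor of `w` occupying the positions strictly between `s` and the
next element of `S` after `s` (or the end of the word if there is no such element). -/
def gapAfter (w : Word) (S : Finset ℕ) (s : ℕ) : Word :=
  ((w.zipIdx.map Prod.swap).filter (fun p => decide (s < p.1 ∧ ∀ j ∈ S, j ≤ s ∨ p.1 < j))).map Prod.snd

/-- Shifted substitution `f(xg(x))`: its constant coefficient is `f(∅)`, and its coefficient
on a nonempty word `w = a_1⋯a_n` is the sum, over subsets `S = {s_1<⋯<s_k}` of the positions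
of `w` containing the first position, of `f(a_{s_1}⋯a_{s_k})·g(w_{(s_1,s_2)})⋯g(w_{(s_k,n+1)})`,
where `w_{(s_j,s_{j+1})}` is the factor of `w` strictly between positions `s_j` and `s_{j+1}`. -/
def subst [CommRing A] (f g : Word → A) : Word → A := fun w =>
  if w = [] then f []
  else ∑ S ∈ (Finset.range w.length).powerset.filter (fun S => 0 ∈ S),
    f (subword w S) * ∏ s ∈ S, g (gapAfter w S s)

/-- Shifted composition `f • g := g · f(xg(x))`. -/
def bullet [CommRing A] (f g : Word → A) : Word → A := cauchy g (subst f g)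

/-- The (possibly empty) factor of `w` occupying the positions strictly before every
element of `S` (for `S = ∅` this is all of `w`). -/
def prefixGap (w : Word) (S : Finset ℕ) : Word :=
  ((w.zipIdx.map Prod.swap).filter (fun p => decide (∀ j ∈ S, p.1 < j))).map Prod.snd

/-!
Expanding the Cauchy product, `(f • g)(w) = Σₖ g(w_{<k}) · f(xg(x))(w_{≥k})`. The term `k = n`
is the summand of `S = ∅`. For `k < n` the inner sum runs over position sets `T ∋ 0` of the
suffix `w_{≥k}`; translating `T` by `k` gives exactly the sets `S` with least element `k`, and
then `w_{<k}` is the gap in front of `S` while the gaps after the elements of `S` are those of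
`T` in the suffix.
-/

namespace List

variable {α : Type*}

def selectIdx (l : List α) (P : ℕ → Prop) [DecidablePred P] : List α :=
  ((l.zipIdx.map Prod.swap).filter fun p => decide (P p.1)).map Prod.snd

theorem selectIdx_append (l₁ l₂ : List α) (P : ℕ → Prop) [DecidablePred P] :
    selectIdx (l₁ ++ l₂) P = selectIdx l₁ P ++ selectIdx l₂ fun i => P (i + l₁.length) := by
  simp only [selectIdx, zipIdx_append, map_append, filter_append, map_map, filter_map]
  rw [Nat.zero_add, zipIdx_eq_map_add (l := l₂), filter_map, map_map]
  congr 1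
  simp [Function.comp_def, Nat.add_comm]

theorem selectIdx_congr {l : List α} {P Q : ℕ → Prop} [DecidablePred P] [DecidablePred Q]
    (h : ∀ i < l.length, (P i ↔ Q i)) : selectIdx l P = selectIdx l Q := by
  refine congrArg _ (filter_congr fun p hp => ?_)
  obtain ⟨⟨a, i⟩, hai, rfl⟩ := mem_map.1 hp
  simpa using h i (mem_zipIdx' hai).1

theorem selectIdx_true (l : List α) : selectIdx l (fun _ => True) = l := by
  simp [selectIdx, Function.comp_def]

theorem selectIdx_false (l : List α) : selectIdx l (fun _ => False) = [] := by
  simp [selectIdx]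

end List

theorem subword_eq_selectIdx (w : Word) (S : Finset ℕ) : subword w S = w.selectIdx (· ∈ S) :=
  rfl

theorem gapAfter_eq_selectIdx (w : Word) (S : Finset ℕ) (s : ℕ) :
    gapAfter w S s = w.selectIdx fun i => s < i ∧ ∀ j ∈ S, j ≤ s ∨ i < j :=
  rfl

theorem prefixGap_eq_selectIdx (w : Word) (S : Finset ℕ) :
    prefixGap w S = w.selectIdx fun i => ∀ j ∈ S, i < j :=
  rfl

section Positions

open List

variable (u v : Word) {T : Finset ℕ}

theorem subword_append_image_add :
    subword (u ++ v) (T.image (· + u.length)) = subword v T := by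
  rw [subword_eq_selectIdx, subword_eq_selectIdx, selectIdx_append,
    selectIdx_congr (Q := fun _ => False), selectIdx_false, nil_append]
  · exact selectIdx_congr fun i _ => by simp
  · intro i hi
    simp only [Finset.mem_image, iff_false, not_exists, not_and]
    omega

theorem gapAfter_append_image_add (s : ℕ) :
    gapAfter (u ++ v) (T.image (· + u.length)) (s + u.length) = gapAfter v T s := by
  rw [gapAfter_eq_selectIdx, gapAfter_eq_selectIdx, selectIdx_append,
    selectIdx_congr (Q := fun _ => False), selectIdx_false, nil_append]
  · refine selectIdx_congr fun i _ => ?_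
    simp only [Finset.mem_image, forall_exists_index, and_imp, forall_apply_eq_imp_iff₂,
      add_lt_add_iff_right, add_le_add_iff_right]
  · intro i hi
    simp only [iff_false, not_and]
    omega

theorem prefixGap_append_image_add (hT : 0 ∈ T) :
    prefixGap (u ++ v) (T.image (· + u.length)) = u := by
  rw [prefixGap_eq_selectIdx, selectIdx_append, selectIdx_congr (Q := fun _ => True),
    selectIdx_true, selectIdx_congr (l := v) (Q := fun _ => False), selectIdx_false, append_nil]
  · intro i _
    simp only [Finset.mem_image, forall_exists_index, and_imp, forall_apply_eq_imp_iff₂,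
      iff_false, not_forall]
    exact ⟨0, hT, by omega⟩
  · intro i hi
    simp only [Finset.mem_image, forall_exists_index, and_imp, forall_apply_eq_imp_iff₂, iff_true]
    omega

theorem subword_empty : subword u ∅ = [] := by
  rw [subword_eq_selectIdx, selectIdx_congr (Q := fun _ => False), selectIdx_false]
  simp

theorem prefixGap_empty : prefixGap u ∅ = u := by
  rw [prefixGap_eq_selectIdx, selectIdx_congr (Q := fun _ => True), selectIdx_true]
  simp

end Positions

namespace Finset

theorem le_of_mem_image_add {T : Finset ℕ} {k j : ℕ} (hj : j ∈ T.image (· + k)) : k ≤ j := by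
  obtain ⟨t, -, rfl⟩ := mem_image.1 hj
  exact Nat.le_add_left k t

theorem self_mem_image_add {T : Finset ℕ} (hT : 0 ∈ T) (k : ℕ) : k ∈ T.image (· + k) :=
  mem_image.2 ⟨0, hT, Nat.zero_add k⟩

theorem image_add_sub_min' {S : Finset ℕ} (hS : S.Nonempty) :
    (S.image (· - S.min' hS)).image (· + S.min' hS) = S := by
  rw [image_image]
  conv_rhs => rw [← image_id (s := S)]
  exact image_congr fun j hj => Nat.sub_add_cancel (S.min'_le j hj)

/-- Splitting subsets of `{0, …, n-1}` according to their least element `k`. -/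
theorem sum_powerset_range_eq_add_sum_image_add {M : Type*} [AddCommMonoid M] (n : ℕ)
    (F : Finset ℕ → M) :
    ∑ S ∈ (range n).powerset, F S =
      F ∅ + ∑ k ∈ range n, ∑ T ∈ (range (n - k)).powerset with 0 ∈ T, F (T.image (· + k)) := by
  rw [← add_sum_erase _ _ (empty_mem_powerset _), sum_sigma']
  congr 1
  symm
  refine sum_bij (fun p _ => p.2.image (· + p.1)) ?_ ?_ ?_ fun _ _ => rfl
  · rintro ⟨k, T⟩ hkT
    dsimp only
    simp only [mem_sigma, mem_range, mem_filter, mem_powerset] at hkT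
    obtain ⟨hk, hTn, hT⟩ := hkT
    refine mem_erase.2 ⟨ne_empty_of_mem (self_mem_image_add hT k), mem_powerset.2 fun j hj => ?_⟩
    obtain ⟨t, ht, rfl⟩ := mem_image.1 hj
    have := mem_range.1 (hTn ht)
    exact mem_range.2 (by omega)
  · rintro ⟨k₁, T₁⟩ h₁ ⟨k₂, T₂⟩ h₂ h
    simp only [mem_sigma, mem_filter] at h₁ h₂ h
    have hk : k₁ = k₂ := le_antisymm
      (le_of_mem_image_add (h ▸ self_mem_image_add h₂.2.2 k₂))
      (le_of_mem_image_add (h.symm ▸ self_mem_image_add h₁.2.2 k₁))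
    subst hk
    rw [image_injective (add_left_injective k₁) h]
  · intro S hS
    obtain ⟨hS, hSn⟩ := mem_erase.1 hS
    rw [mem_powerset] at hSn
    have hne := nonempty_iff_ne_empty.2 hS
    refine ⟨⟨S.min' hne, S.image (· - S.min' hne)⟩, ?_, image_add_sub_min' hne⟩
    simp only [mem_sigma, mem_filter, mem_powerset, mem_image]
    refine ⟨hSn (S.min'_mem hne), fun j hj => ?_, ⟨_, S.min'_mem hne, Nat.sub_self _⟩⟩
    obtain ⟨s, hs, rfl⟩ := mem_image.1 hj
    have := mem_range.1 (hSn hs)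
    have := S.min'_le s hs
    exact mem_range.2 (by omega)

end Finset

open Finset

section Series

variable [CommRing A] (f g : Word → A)

theorem subst_nil : subst f g [] = f [] := if_pos rfl

theorem subst_of_ne_nil {w : Word} (hw : w ≠ []) :
    subst f g w = ∑ S ∈ (range w.length).powerset with 0 ∈ S,
      f (subword w S) * ∏ s ∈ S, g (gapAfter w S s) := if_neg hw

theorem summand_append_image_add (u v : Word) {T : Finset ℕ} (hT : 0 ∈ T) :
    f (subword (u ++ v) (T.image (· + u.length))) *
        (g (prefixGap (u ++ v) (T.image (· + u.length))) *
          ∏ s ∈ T.image (· + u.length), g (gapAfter (u ++ v) (T.image (· + u.length)) s)) =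
      g u * (f (subword v T) * ∏ t ∈ T, g (gapAfter v T t)) := by
  rw [subword_append_image_add, prefixGap_append_image_add u v hT,
    prod_image fun _ _ _ _ => Nat.add_right_cancel]
  simp only [gapAfter_append_image_add]
  ring

end Series

theorem stmt4_general [CommRing A] (f g : Word → A) (w : Word) :
    bullet f g w =
      ∑ S ∈ (Finset.range w.length).powerset,
        f (subword w S) * (g (prefixGap w S) * ∏ s ∈ S, g (gapAfter w S s)) := by
  rw [sum_powerset_range_eq_add_sum_image_add, subword_empty, prefixGap_empty, prod_empty,
    bullet, cauchy, sum_range_succ, add_comm, List.take_length, List.drop_length, subst_nil]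
  congr 1
  · ring
  refine sum_congr rfl fun k hk => ?_
  have hkw : k < w.length := mem_range.1 hk
  rw [subst_of_ne_nil f g (List.drop_eq_nil_iff.not.2 hkw.not_ge), List.length_drop, mul_sum]
  refine sum_congr rfl fun T hT => ?_
  have hsplit := summand_append_image_add f g (w.take k) (w.drop k) (mem_filter.1 hT).2
  rw [List.take_append_drop, List.length_take_of_le hkw.le] at hsplit
  exact hsplit.symm

/-- for `f, g ∈ G^1` and a nonempty word `w` of length `n`, the coefficient of
the shifted composition is `(f • g)(w) = Σ_{S ⊆ {0,…,n-1}} f(w_S) ∏ g(w_{J^S_i})`, the sum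
being over all subsets `S` and the product over the (maximal) intervals of the complement
of `S`: here the complement intervals are realized as the factor before the first element
of `S` together with the factor after each `s ∈ S`, the empty ones contributing the factor
`g(∅) = 1`.  (This expresses that the generating-series map is a group isomorphism from the
character group of the word Hopf algebra `H` with convolution onto `(G^1, •)`.) -/
theorem stmt4 [CommRing A] (f g : Word → A) (hf : f [] = 1) (hg : g [] = 1)
    (w : Word) (hw : w ≠ []) :
    bullet f g w =
      ∑ S ∈ (Finset.range w.length).powerset,
        f (subword w S) * (g (prefixGap w S) * ∏ s ∈ S, g (gapAfter w S s)) :=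
  stmt4_general f g w
end

section
/- Let f ∈ G^1 and let g = f^{•−1} be its inverse for shifted composition. Then the shifted substitution g(xf(x)) is the Cauchy multiplicative inverse of f: f · g(xf(x)) = 1 = g(xf(x)) · f. -/
variable {A : Type*}

section CauchyProduct

variable [CommRing A]

lemma cauchy_nil (f g : Word → A) : cauchy f g [] = f [] * g [] := by
  simp [cauchy]

lemma cauchy_cons (f g : Word → A) (a : ℕ+) (t : Word) :
    cauchy f g (a :: t) = f [] * g (a :: t) + cauchy (fun u => f (a :: u)) g t := by
  rw [cauchy, List.length_cons, Finset.sum_range_succ']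
  simp [cauchy, add_comm]

lemma cauchy_mul_add_left (c : A) (p q h : Word → A) (w : Word) :
    cauchy (fun u => c * p u + q u) h w = c * cauchy p h w + cauchy q h w := by
  simp only [cauchy, add_mul, mul_assoc, Finset.sum_add_distrib, Finset.mul_sum]

lemma one_cauchy (f : Word → A) : cauchy one f = f := by
  funext w
  cases w with
  | nil => simp [cauchy_nil, one]
  | cons a t => rw [cauchy_cons]; simp [one, cauchy]

lemma cauchy_one (f : Word → A) : cauchy f one = f := by
  funext w
  induction w generalizing f with
  | nil => simp [cauchy_nil, one]
  | cons a t ih => simp [cauchy_cons, one, ih (fun u => f (a :: u))]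

lemma cauchy_assoc (f g h : Word → A) : cauchy (cauchy f g) h = cauchy f (cauchy g h) := by
  funext w
  induction w generalizing f g with
  | nil => simp only [cauchy_nil, mul_assoc]
  | cons a t ih =>
    have shift_cauchy : (fun u => cauchy f g (a :: u))
        = fun u => f [] * g (a :: u) + cauchy (fun u => f (a :: u)) g u := by
      funext u
      exact cauchy_cons f g a u
    rw [cauchy_cons, cauchy_cons, cauchy_cons, shift_cauchy, cauchy_mul_add_left, ih,
      cauchy_nil]
    ring

/-- Meaningful only when `b []` is a unit (otherwise `Ring.inverse` is `0`): the coefficient on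
`a :: t` solves `(b · r)(a :: t) = 0` for `r (a :: t)`. -/
noncomputable def rightInv (b : Word → A) : Word → A
  | [] => Ring.inverse (b [])
  | a :: t => -Ring.inverse (b []) *
      ∑ k ∈ Finset.range (t.length + 1), b (a :: t.take k) * rightInv b (t.drop k)
termination_by w => w.length
decreasing_by simp only [List.length_drop, List.length_cons]; omega

lemma cauchy_rightInv (b : Word → A) (hb : IsUnit (b [])) : cauchy b (rightInv b) = one := by
  funext w
  cases w with
  | nil => simp [cauchy_nil, one, rightInv, Ring.mul_inverse_cancel _ hb]
  | cons a t =>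
    rw [cauchy_cons, rightInv, ← mul_assoc, mul_neg, Ring.mul_inverse_cancel _ hb]
    simp [cauchy, one]

lemma cauchy_eq_one_symm {a b : Word → A} (h : cauchy a b = one) : cauchy b a = one := by
  have hb : IsUnit (b []) := by
    refine IsUnit.of_mul_eq_one_right (a []) ?_
    simpa [cauchy_nil, one] using congrFun h []
  have a_eq : a = rightInv b := by
    calc a = cauchy a (cauchy b (rightInv b)) := by rw [cauchy_rightInv b hb, cauchy_one]
      _ = rightInv b := by rw [← cauchy_assoc, h, one_cauchy]
  rw [a_eq, cauchy_rightInv b hb]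

end CauchyProduct

theorem stmt10_general [CommRing A] (f g : Word → A)
    (hinv₁ : bullet g f = one) :
    cauchy f (subst g f) = one ∧ cauchy (subst g f) f = one :=
  ⟨hinv₁, cauchy_eq_one_symm hinv₁⟩

/-- if `f ∈ G^1` and `g = f^{•−1}` is its inverse for shifted composition,
then the shifted substitution `g(xf(x))` is the Cauchy multiplicative inverse of `f`:
`f · g(xf(x)) = 1 = g(xf(x)) · f`. -/
theorem stmt10 [CommRing A] (f g : Word → A) (hf : f [] = 1) (hg : g [] = 1)
    (hinv₁ : bullet g f = one) (hinv₂ : bullet f g = one) :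
    cauchy f (subst g f) = one ∧ cauchy (subst g f) f = one :=
  stmt10_general f g hinv₁
end

section
/- Free moment–cumulant relations via non-crossing partitions: let m ∈ G^1 and let κ ∈ G^0 be the unique series with m = 1 + κ(x m(x)). Then for every nonempty word w = a_1⋯a_n, m(w) = Σ_{π ∈ NC(n)} ∏_{B ∈ π} κ(w_B), where the sum is over all non-crossing partitions π of {1,…,n} and w_B denotes the subword of w consisting of the letters at the positions of the block B taken in increasing order. -/
variable {A : Type*}

/-- `P` is a partition of `{0, …, n-1}`: its blocks are nonempty subsets of `{0,…,n-1}`,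
pairwise disjoint, and covering `{0,…,n-1}`. -/
def IsPartitionOf (n : ℕ) (P : Finset (Finset ℕ)) : Prop :=
  (∀ B ∈ P, B.Nonempty ∧ B ⊆ Finset.range n) ∧
  (∀ B₁ ∈ P, ∀ B₂ ∈ P, B₁ ≠ B₂ → Disjoint B₁ B₂) ∧
  (∀ i ∈ Finset.range n, ∃ B ∈ P, i ∈ B)

/-- `P` is non-crossing: there are no `p < q < r < s` with `p, r` in one block and
`q, s` in a different block. -/
def IsNonCrossing (P : Finset (Finset ℕ)) : Prop :=
  ∀ B₁ ∈ P, ∀ B₂ ∈ P, B₁ ≠ B₂ →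
    ∀ p ∈ B₁, ∀ q ∈ B₂, ∀ r ∈ B₁, ∀ s ∈ B₂, ¬(p < q ∧ q < r ∧ r < s)

open scoped Classical in
/-- The (finite) set of non-crossing partitions of `{0, …, n-1}`. -/
noncomputable def NC (n : ℕ) : Finset (Finset (Finset ℕ)) :=
  ((Finset.range n).powerset.powerset).filter fun P => IsPartitionOf n P ∧ IsNonCrossing P

/-!
Let `S = {s_1 < ⋯ < s_k}` be the block containing the first position of a non-crossing partition
of `{0, …, n-1}`. Every other block lies in one of the gaps `(s_j, s_{j+1})` (with `s_{k+1} = n`),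
and the blocks inside a gap form a non-crossing partition of that gap; conversely, a set `S ∋ 0`
together with a non-crossing partition of each of its gaps glues to a non-crossing partition.
So `M(w) = Σ_{π ∈ NC(|w|)} ∏_{B ∈ π} κ(w_B)` satisfies `M(w) = Σ_S κ(w_S) ∏_j M(w_{(s_j,s_{j+1})})`
for nonempty `w`, i.e. `M = 1 + κ(x M(x))`. This equation determines the coefficient on `w`
from coefficients on strictly shorter words, so `m = M`.
-/

open Finset

section Positions

variable {α : Type*}

def filterIdx (p : ℕ → Bool) : List α → List α
  | [] => []
  | a :: w => (if p 0 then [a] else []) ++ filterIdx (fun i => p (i + 1)) w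

lemma filterIdx_eq_zipIdx (p : ℕ → Bool) (w : List α) (k : ℕ) :
    (((w.zipIdx k).map Prod.swap).filter (fun x => p x.1)).map Prod.snd =
      filterIdx (fun i => p (i + k)) w := by
  induction w generalizing k with
  | nil => rfl
  | cons a w ih =>
    have hshift : (fun i => p (i + (k + 1))) = fun i => p (i + 1 + k) := by
      funext i; rw [Nat.add_right_comm, Nat.add_assoc]
    by_cases h : p k <;> simp [filterIdx, h, ih, hshift]

lemma filterIdx_congr {p p' : ℕ → Bool} {w : List α} (h : ∀ i < w.length, p i = p' i) :
    filterIdx p w = filterIdx p' w := by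
  induction w generalizing p p' with
  | nil => rfl
  | cons a w ih =>
    rw [filterIdx, filterIdx, h 0 (by simp), ih fun i hi => h (i + 1) (by simpa using hi)]

lemma filterIdx_eq_nil {p : ℕ → Bool} {w : List α} (h : ∀ i < w.length, p i = false) :
    filterIdx p w = [] := by
  induction w generalizing p with
  | nil => rfl
  | cons a w ih =>
    simp [filterIdx, h 0 (by simp), ih fun i hi => h (i + 1) (by simpa using hi)]

lemma filterIdx_interval (w : List α) (a b : ℕ) :
    filterIdx (fun i => decide (a ≤ i ∧ i < b)) w = (w.drop a).take (b - a) := by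
  induction w generalizing a b with
  | nil => simp [filterIdx]
  | cons x w ih =>
    rw [filterIdx]
    have hshift : (fun i => decide (a ≤ i + 1 ∧ i + 1 < b)) =
        fun i => decide (a - 1 ≤ i ∧ i < b - 1) := by
      funext i; simp only [decide_eq_decide]; omega
    rw [hshift, ih]
    rcases a with _ | a <;> rcases b with _ | b <;> simp

lemma filterIdx_drop (p : ℕ → Bool) (w : List α) (a : ℕ) :
    filterIdx p (w.drop a) = filterIdx (fun i => decide (a ≤ i) && p (i - a)) w := by
  induction w generalizing a with
  | nil => simp [filterIdx]
  | cons x w ih =>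
    rcases a with _ | a
    · exact filterIdx_congr fun i _ => by simp
    · rw [List.drop_succ_cons, ih, filterIdx, if_neg (by simp), List.nil_append]
      exact filterIdx_congr fun i _ => by simp

lemma filterIdx_take (p : ℕ → Bool) (w : List α) (t : ℕ) :
    filterIdx p (w.take t) = filterIdx (fun i => p i && decide (i < t)) w := by
  induction w generalizing p t with
  | nil => simp [filterIdx]
  | cons x w ih =>
    rcases t with _ | t
    · exact (filterIdx_eq_nil fun i _ => by simp).symm
    · rw [List.take_succ_cons, filterIdx, filterIdx, ih]
      congr 1
      · simp
      · exact filterIdx_congr fun i _ => by simp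

end Positions

def shift (a : ℕ) (B : Finset ℕ) : Finset ℕ := B.map (addRightEmbedding a)

def unshift (a : ℕ) (B : Finset ℕ) : Finset ℕ := B.image (· - a)

lemma mem_shift {a i : ℕ} {B : Finset ℕ} : i ∈ shift a B ↔ a ≤ i ∧ i - a ∈ B := by
  simp only [shift, mem_map, addRightEmbedding_apply]
  constructor
  · rintro ⟨b, hb, rfl⟩; simpa using hb
  · rintro ⟨h1, h2⟩; exact ⟨i - a, h2, by omega⟩

lemma add_mem_shift {a i : ℕ} {B : Finset ℕ} : i + a ∈ shift a B ↔ i ∈ B := by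
  simp [mem_shift]

lemma shift_injective (a : ℕ) : Function.Injective (shift a) :=
  map_injective _

lemma unshift_shift (a : ℕ) (B : Finset ℕ) : unshift a (shift a B) = B := by
  ext i; simp [unshift, shift]

lemma shift_unshift {a : ℕ} {B : Finset ℕ} (hB : ∀ i ∈ B, a ≤ i) : shift a (unshift a B) = B := by
  ext i
  simp only [unshift, shift, mem_map, mem_image, addRightEmbedding_apply]
  constructor
  · rintro ⟨_, ⟨j, hj, rfl⟩, rfl⟩
    rwa [Nat.sub_add_cancel (hB j hj)]
  · exact fun hi => ⟨i - a, ⟨i, hi, rfl⟩, Nat.sub_add_cancel (hB i hi)⟩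

lemma mem_unshift {a i : ℕ} {B : Finset ℕ} (hB : ∀ j ∈ B, a ≤ j) :
    i ∈ unshift a B ↔ i + a ∈ B := by
  rw [← add_mem_shift, shift_unshift hB]

lemma subword_eq_filterIdx (w : Word) (S : Finset ℕ) :
    subword w S = filterIdx (fun i => decide (i ∈ S)) w := by
  simpa [subword] using filterIdx_eq_zipIdx (fun i => decide (i ∈ S)) w 0

lemma gapAfter_eq_filterIdx (w : Word) (S : Finset ℕ) (s : ℕ) :
    gapAfter w S s = filterIdx (fun i => decide (s < i ∧ ∀ j ∈ S, j ≤ s ∨ i < j)) w := by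
  simpa [gapAfter] using
    filterIdx_eq_zipIdx (fun i => decide (s < i ∧ ∀ j ∈ S, j ≤ s ∨ i < j)) w 0

lemma subword_take {B : Finset ℕ} {L : ℕ} (hB : B ⊆ range L) (w : Word) :
    subword (w.take L) B = subword w B := by
  rw [subword_eq_filterIdx, subword_eq_filterIdx, filterIdx_take]
  refine filterIdx_congr fun i _ => ?_
  by_cases h : i ∈ B
  · simp [h, mem_range.1 (hB h)]
  · simp [h]

lemma subword_drop (w : Word) (a : ℕ) (B : Finset ℕ) :
    subword (w.drop a) B = subword w (shift a B) := by
  rw [subword_eq_filterIdx, subword_eq_filterIdx, filterIdx_drop]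
  exact filterIdx_congr fun i _ => by simp [mem_shift]

lemma subword_Ico (w : Word) (a b : ℕ) : subword w (Ico a b) = (w.drop a).take (b - a) := by
  rw [subword_eq_filterIdx, ← filterIdx_interval]
  exact filterIdx_congr fun i _ => by simp

def gapEnd (n : ℕ) (S : Finset ℕ) (s : ℕ) : ℕ :=
  (insert n (S.filter (s < ·))).min' (insert_nonempty _ _)

def gap (n : ℕ) (S : Finset ℕ) (s : ℕ) : Finset ℕ := Ico (s + 1) (gapEnd n S s)

section Gaps

variable {n s : ℕ} {S B : Finset ℕ}

lemma gapEnd_le_self : gapEnd n S s ≤ n :=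
  min'_le _ n (mem_insert_self _ _)

lemma gapEnd_le_of_mem {j : ℕ} (hj : j ∈ S) (h : s < j) : gapEnd n S s ≤ j :=
  min'_le _ j (mem_insert_of_mem (mem_filter.2 ⟨hj, h⟩))

lemma gapEnd_mem (h : gapEnd n S s ≠ n) : gapEnd n S s ∈ S := by
  rcases mem_insert.1 (min'_mem (insert n (S.filter (s < ·))) (insert_nonempty _ _)) with h' | h'
  · exact absurd h' h
  · exact (mem_filter.1 h').1

lemma lt_gapEnd_iff {i : ℕ} (hi : i < n) : i < gapEnd n S s ↔ ∀ j ∈ S, s < j → i < j := by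
  simp only [gapEnd, lt_min'_iff, mem_insert, mem_filter, forall_eq_or_imp, and_imp]
  exact and_iff_right hi

lemma notMem_gap_of_mem {j : ℕ} (hj : j ∈ S) : j ∉ gap n S s := by
  rw [gap, mem_Ico]
  have := gapEnd_le_of_mem (n := n) (s := s) hj
  omega

lemma gap_subset_range : gap n S s ⊆ range n := fun _ hi =>
  mem_range.2 ((mem_Ico.1 hi).2.trans_le gapEnd_le_self)

lemma zero_notMem_gap : 0 ∉ gap n S s := by
  simp [gap]

lemma disjoint_gap {s' : ℕ} (hs : s ∈ S) (hs' : s' ∈ S) (h : s ≠ s') :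
    Disjoint (gap n S s) (gap n S s') := by
  wlog hlt : s < s' generalizing s s'
  · exact (this hs' hs h.symm (by omega)).symm
  rw [disjoint_left]
  intro i hi hi'
  rw [gap, mem_Ico] at hi hi'
  have := gapEnd_le_of_mem (n := n) hs' hlt
  omega

lemma exists_mem_gap (h0 : 0 ∈ S) {i : ℕ} (hi : i < n) (hiS : i ∉ S) :
    ∃ s ∈ S, i ∈ gap n S s := by
  have hT : (S.filter (· < i)).Nonempty :=
    ⟨0, mem_filter.2 ⟨h0, Nat.pos_of_ne_zero fun h => hiS (h ▸ h0)⟩⟩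
  obtain ⟨hsS, hsi⟩ := mem_filter.1 ((S.filter (· < i)).max'_mem hT)
  refine ⟨_, hsS, mem_Ico.2 ⟨hsi, (lt_gapEnd_iff hi).2 fun j hj hsj => ?_⟩⟩
  by_contra! hji
  have hle := le_max' (S.filter (· < i)) j
    (mem_filter.2 ⟨hj, lt_of_le_of_ne hji fun h => hiS (h ▸ hj)⟩)
  omega

lemma succ_le_of_mem_gap {i : ℕ} (hi : i ∈ gap n S s) : s + 1 ≤ i :=
  (mem_Ico.1 hi).1

lemma shift_subset_gap (hB : B ⊆ range #(gap n S s)) : shift (s + 1) B ⊆ gap n S s := by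
  intro i hi
  have := mem_range.1 (hB (mem_shift.1 hi).2)
  rw [gap, Nat.card_Ico] at this
  rw [gap, mem_Ico]
  have := (mem_shift.1 hi).1
  omega

lemma unshift_subset_range (hB : B ⊆ gap n S s) : unshift (s + 1) B ⊆ range #(gap n S s) := by
  intro i hi
  have := mem_Ico.1 (hB ((mem_unshift fun _ hj => succ_le_of_mem_gap (hB hj)).1 hi))
  rw [mem_range, gap, Nat.card_Ico]
  omega

lemma mem_unshift_of_subset_gap {i : ℕ} (hB : B ⊆ gap n S s) :
    i ∈ unshift (s + 1) B ↔ i + (s + 1) ∈ B :=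
  mem_unshift fun _ hj => succ_le_of_mem_gap (hB hj)

end Gaps

lemma gapAfter_eq_subword_gap (w : Word) (S : Finset ℕ) (s : ℕ) :
    gapAfter w S s = subword w (gap w.length S s) := by
  rw [gapAfter_eq_filterIdx, subword_eq_filterIdx]
  refine filterIdx_congr fun i hi => ?_
  rw [decide_eq_decide, gap, mem_Ico, lt_gapEnd_iff hi]
  constructor
  · rintro ⟨hsi, h⟩
    exact ⟨hsi, fun j hj hsj => (h j hj).resolve_left (by omega)⟩
  · rintro ⟨hsi, h⟩
    exact ⟨hsi, fun j hj => (le_or_gt j s).imp_right (h j hj)⟩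

lemma gapAfter_eq (w : Word) (S : Finset ℕ) (s : ℕ) :
    gapAfter w S s = (w.drop (s + 1)).take (gapEnd w.length S s - (s + 1)) := by
  rw [gapAfter_eq_subword_gap, gap, subword_Ico]

lemma length_gapAfter (w : Word) (S : Finset ℕ) (s : ℕ) :
    (gapAfter w S s).length = #(gap w.length S s) := by
  have := gapEnd_le_self (n := w.length) (S := S) (s := s)
  rw [gapAfter_eq, List.length_take, List.length_drop, gap, Nat.card_Ico]
  omega

lemma subword_gapAfter {w : Word} {S B : Finset ℕ} {s : ℕ}
    (hB : B ⊆ range #(gap w.length S s)) :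
    subword (gapAfter w S s) B = subword w (shift (s + 1) B) := by
  rw [gap, Nat.card_Ico] at hB
  rw [gapAfter_eq, subword_take hB, subword_drop]

lemma mem_NC {n : ℕ} {P : Finset (Finset ℕ)} :
    P ∈ NC n ↔ IsPartitionOf n P ∧ IsNonCrossing P := by
  classical
  rw [NC, mem_filter, mem_powerset, and_iff_right_iff_imp]
  exact fun h B hB => mem_powerset.2 (h.1.1 B hB).2

lemma NC_zero : NC 0 = {∅} := by
  ext P
  rw [mem_NC, mem_singleton]
  constructor
  · rintro ⟨⟨h1, -, -⟩, -⟩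
    refine eq_empty_of_forall_notMem fun B hB => ?_
    obtain ⟨⟨b, hb⟩, hsub⟩ := h1 B hB
    simpa using hsub hb
  · rintro rfl
    simp [IsPartitionOf, IsNonCrossing]

def firstBlock (P : Finset (Finset ℕ)) : Finset ℕ := (P.filter (0 ∈ ·)).sup id

lemma firstBlock_eq {n : ℕ} {P : Finset (Finset ℕ)} (hP : IsPartitionOf n P) {B : Finset ℕ}
    (hB : B ∈ P) (h0 : 0 ∈ B) : firstBlock P = B := by
  have : P.filter (0 ∈ ·) = {B} := by
    ext C
    rw [mem_filter, mem_singleton]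
    refine ⟨fun ⟨hC, hC0⟩ => ?_, by rintro rfl; exact ⟨hB, h0⟩⟩
    by_contra hne
    exact disjoint_left.1 (hP.2.1 C hC B hB hne) hC0 h0
  rw [firstBlock, this, sup_singleton, id]

lemma subset_gap_of_isNonCrossing {n : ℕ} {P : Finset (Finset ℕ)} (hP : P ∈ NC n)
    {S : Finset ℕ} (hSP : S ∈ P) (h0 : 0 ∈ S) {s : ℕ} (hs : s ∈ S) {B : Finset ℕ}
    (hBP : B ∈ P) (hBS : B ≠ S) {x : ℕ} (hx : x ∈ B) (hxg : x ∈ gap n S s) :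
    B ⊆ gap n S s := by
  obtain ⟨⟨hblocks, hdisj, -⟩, hnc⟩ := mem_NC.1 hP
  obtain ⟨hsx, hxe⟩ := mem_Ico.1 hxg
  intro y hy
  have hyS : y ∉ S := disjoint_left.1 (hdisj B hBP S hSP hBS) hy
  rw [gap, mem_Ico]
  by_contra! hout
  -- otherwise `0 < y < s < x` or `s < x < gapEnd < y` makes `B` cross `S`
  rcases Nat.lt_or_ge y (s + 1) with hys | hys
  · have : y ≠ 0 := fun h => hyS (h ▸ h0)
    have : y ≠ s := fun h => hyS (h ▸ hs)
    exact hnc S hSP B hBP hBS.symm 0 h0 y hy s hs x hx ⟨by omega, by omega, by omega⟩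
  · have hey := hout hys
    have hyn : y < n := mem_range.1 ((hblocks B hBP).2 hy)
    have heS : gapEnd n S s ∈ S := gapEnd_mem (by omega)
    have : y ≠ gapEnd n S s := fun h => hyS (h ▸ heS)
    exact hnc S hSP B hBP hBS.symm s hs x hx _ heS y hy ⟨by omega, by omega, by omega⟩

-- The partition of the gap after `s` is stored shifted down to `{0, …, #gap - 1}`.
def glue (S : Finset ℕ) (q : ∀ s ∈ S, Finset (Finset ℕ)) : Finset (Finset ℕ) :=
  insert S (S.attach.biUnion fun s => (q s.1 s.2).image (shift (s.1 + 1)))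

section Glue

variable {n : ℕ} {S : Finset ℕ} {q : ∀ s ∈ S, Finset (Finset ℕ)}

lemma mem_glue {C : Finset ℕ} :
    C ∈ glue S q ↔ C = S ∨ ∃ (s : ℕ) (hs : s ∈ S), ∃ B ∈ q s hs, C = shift (s + 1) B := by
  simp only [glue, mem_insert, mem_biUnion, mem_attach, true_and, mem_image, Subtype.exists]
  exact or_congr Iff.rfl <| exists_congr fun s => exists_congr fun hs =>
    exists_congr fun B => and_congr_right fun _ => eq_comm

lemma shift_subset_gap_of_mem (hq : ∀ s (hs : s ∈ S), q s hs ∈ NC #(gap n S s))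
    {s : ℕ} {hs : s ∈ S} {B : Finset ℕ} (hB : B ∈ q s hs) : shift (s + 1) B ⊆ gap n S s :=
  shift_subset_gap ((mem_NC.1 (hq s hs)).1.1 B hB).2

lemma glue_isPartitionOf (hq : ∀ s (hs : s ∈ S), q s hs ∈ NC #(gap n S s)) (h0 : 0 ∈ S)
    (hSr : S ⊆ range n) : IsPartitionOf n (glue S q) := by
  refine ⟨fun B hB => ?_, fun B₁ h₁ B₂ h₂ hne => ?_, fun i hi => ?_⟩
  · rcases mem_glue.1 hB with rfl | ⟨s, hs, C, hC, rfl⟩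
    · exact ⟨⟨0, h0⟩, hSr⟩
    · exact ⟨((mem_NC.1 (hq s hs)).1.1 C hC).1.map,
        (shift_subset_gap_of_mem hq hC).trans gap_subset_range⟩
  · rcases mem_glue.1 h₁ with rfl | ⟨s, hs, C, hC, rfl⟩ <;>
      rcases mem_glue.1 h₂ with rfl | ⟨s', hs', C', hC', rfl⟩
    · exact absurd rfl hne
    · exact disjoint_left.2 fun x hxS hx =>
        notMem_gap_of_mem hxS (shift_subset_gap_of_mem hq hC' hx)
    · exact disjoint_right.2 fun x hxS hx =>
        notMem_gap_of_mem hxS (shift_subset_gap_of_mem hq hC hx)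
    · by_cases hss : s = s'
      · subst hss
        have hCC : C ≠ C' := fun h => hne (by rw [h])
        exact (disjoint_map _).2 ((mem_NC.1 (hq s hs)).1.2.1 C hC C' hC' hCC)
      · exact ((disjoint_gap hs hs' hss).mono_left (shift_subset_gap_of_mem hq hC)).mono_right
          (shift_subset_gap_of_mem hq hC')
  · by_cases hiS : i ∈ S
    · exact ⟨S, mem_glue.2 (Or.inl rfl), hiS⟩
    obtain ⟨s, hs, hig⟩ := exists_mem_gap h0 (mem_range.1 hi) hiS
    obtain ⟨h1, h2⟩ := mem_Ico.1 hig
    obtain ⟨B, hB, hiB⟩ := (mem_NC.1 (hq s hs)).1.2.2 (i - (s + 1)) (by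
      rw [mem_range, gap, Nat.card_Ico]; omega)
    exact ⟨shift (s + 1) B, mem_glue.2 (Or.inr ⟨s, hs, B, hB, rfl⟩), mem_shift.2 ⟨h1, hiB⟩⟩

lemma glue_isNonCrossing (hq : ∀ s (hs : s ∈ S), q s hs ∈ NC #(gap n S s)) :
    IsNonCrossing (glue S q) := by
  intro B₁ h₁ B₂ h₂ hne a ha b hb c hc d hd ⟨hab, hbc, hcd⟩
  rcases mem_glue.1 h₁ with rfl | ⟨s, hs, C, hC, rfl⟩ <;>
    rcases mem_glue.1 h₂ with rfl | ⟨s', hs', C', hC', rfl⟩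
  · exact hne rfl
  · obtain ⟨hb1, -⟩ := mem_Ico.1 (shift_subset_gap_of_mem hq hC' hb)
    obtain ⟨-, hd2⟩ := mem_Ico.1 (shift_subset_gap_of_mem hq hC' hd)
    have := gapEnd_le_of_mem (n := n) hc (show s' < c by omega)
    omega
  · obtain ⟨ha1, -⟩ := mem_Ico.1 (shift_subset_gap_of_mem hq hC ha)
    obtain ⟨-, hc2⟩ := mem_Ico.1 (shift_subset_gap_of_mem hq hC hc)
    have := gapEnd_le_of_mem (n := n) hb (show s < b by omega)
    omega
  · by_cases hss : s = s'
    · subst hss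
      have hCC : C ≠ C' := fun h => hne (by rw [h])
      obtain ⟨ha1, ha2⟩ := mem_shift.1 ha
      obtain ⟨hb1, hb2⟩ := mem_shift.1 hb
      obtain ⟨hc1, hc2⟩ := mem_shift.1 hc
      obtain ⟨hd1, hd2⟩ := mem_shift.1 hd
      exact (mem_NC.1 (hq s hs)).2 C hC C' hC' hCC _ ha2 _ hb2 _ hc2 _ hd2
        ⟨by omega, by omega, by omega⟩
    · obtain ⟨ha1, ha2⟩ := mem_Ico.1 (shift_subset_gap_of_mem hq hC ha)
      obtain ⟨hc1, hc2⟩ := mem_Ico.1 (shift_subset_gap_of_mem hq hC hc)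
      obtain ⟨hb1, hb2⟩ := mem_Ico.1 (shift_subset_gap_of_mem hq hC' hb)
      obtain ⟨hd1, hd2⟩ := mem_Ico.1 (shift_subset_gap_of_mem hq hC' hd)
      rcases lt_or_gt_of_ne hss with h | h
      · have := gapEnd_le_of_mem (n := n) hs' h
        omega
      · have := gapEnd_le_of_mem (n := n) hs h
        omega

lemma glue_mem_NC (hq : ∀ s (hs : s ∈ S), q s hs ∈ NC #(gap n S s)) (h0 : 0 ∈ S)
    (hSr : S ⊆ range n) : glue S q ∈ NC n :=
  mem_NC.2 ⟨glue_isPartitionOf hq h0 hSr, glue_isNonCrossing hq⟩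

lemma prod_glue {M : Type*} [CommMonoid M] (hq : ∀ s (hs : s ∈ S), q s hs ∈ NC #(gap n S s))
    (h0 : 0 ∈ S) (f : Finset ℕ → M) :
    ∏ B ∈ glue S q, f B = f S * ∏ s ∈ S.attach, ∏ B ∈ q s.1 s.2, f (shift (s.1 + 1) B) := by
  have hne : ∀ {s : ℕ} {hs : s ∈ S} {B : Finset ℕ}, B ∈ q s hs → B.Nonempty :=
    fun {s hs} B hB => ((mem_NC.1 (hq s hs)).1.1 B hB).1
  rw [glue, prod_insert, prod_biUnion]
  · exact congrArg _ (prod_congr rfl fun s _ => prod_image fun B _ B' _ h => shift_injective _ h)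
  · intro s _ s' _ hss
    refine disjoint_left.2 fun C hC hC' => ?_
    obtain ⟨B, hB, rfl⟩ := mem_image.1 hC
    obtain ⟨B', hB', hBB⟩ := mem_image.1 hC'
    obtain ⟨x, hx⟩ : (shift (s.1 + 1) B).Nonempty := (hne hB).map
    have hx' := hx
    rw [← hBB] at hx'
    exact disjoint_left.1 (disjoint_gap s.2 s'.2 fun h => hss (Subtype.ext h))
      (shift_subset_gap_of_mem hq hB hx) (shift_subset_gap_of_mem hq hB' hx')
  · simp only [mem_biUnion, mem_image, not_exists, not_and]
    intro s _ B hB hBS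
    rw [← hBS] at h0
    exact zero_notMem_gap (shift_subset_gap_of_mem hq hB h0)

end Glue

lemma unshift_gapBlocks_mem_NC {n : ℕ} {P : Finset (Finset ℕ)} (hP : P ∈ NC n)
    {S : Finset ℕ} (hSP : S ∈ P) (h0 : 0 ∈ S) {s : ℕ} (hs : s ∈ S) :
    (P.filter (· ⊆ gap n S s)).image (unshift (s + 1)) ∈ NC #(gap n S s) := by
  obtain ⟨⟨hblocks, hdisj, hcover⟩, hnc⟩ := mem_NC.1 hP
  simp only [mem_NC, IsPartitionOf, IsNonCrossing, mem_image, mem_filter, forall_exists_index,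
    and_imp]
  refine ⟨⟨?_, ?_, fun i hi => ?_⟩, ?_⟩
  · rintro _ B hB hBg rfl
    exact ⟨(hblocks B hB).1.image _, unshift_subset_range hBg⟩
  · rintro _ B₁ hB₁ hB₁g rfl _ B₂ hB₂ hB₂g rfl hne
    refine disjoint_left.2 fun i hi₁ hi₂ => ?_
    rw [mem_unshift_of_subset_gap hB₁g] at hi₁
    rw [mem_unshift_of_subset_gap hB₂g] at hi₂
    exact disjoint_left.1 (hdisj B₁ hB₁ B₂ hB₂ fun h => hne (by rw [h])) hi₁ hi₂
  · have hig : i + (s + 1) ∈ gap n S s := by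
      rw [mem_range, gap, Nat.card_Ico] at hi
      rw [gap, mem_Ico]
      omega
    obtain ⟨B, hB, hiB⟩ := hcover _ (gap_subset_range hig)
    have hBS : B ≠ S := by
      rintro rfl
      exact notMem_gap_of_mem hiB hig
    have hBg := subset_gap_of_isNonCrossing hP hSP h0 hs hB hBS hiB hig
    exact ⟨_, ⟨B, ⟨hB, hBg⟩, rfl⟩, (mem_unshift_of_subset_gap hBg).2 hiB⟩
  · rintro _ B₁ hB₁ hB₁g rfl _ B₂ hB₂ hB₂g rfl hne a ha b hb c hc d hd ⟨hab, hbc, hcd⟩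
    rw [mem_unshift_of_subset_gap hB₁g] at ha hc
    rw [mem_unshift_of_subset_gap hB₂g] at hb hd
    exact hnc B₁ hB₁ B₂ hB₂ (fun h => hne (by rw [h])) _ ha _ hb _ hc _ hd
      ⟨by omega, by omega, by omega⟩

def splitAtFirstBlock (n : ℕ) (P : Finset (Finset ℕ)) :
    Σ S : Finset ℕ, ∀ s ∈ S, Finset (Finset ℕ) :=
  ⟨firstBlock P, fun s _ => (P.filter (· ⊆ gap n (firstBlock P) s)).image (unshift (s + 1))⟩

noncomputable def firstBlockData (n : ℕ) : Finset (Σ S : Finset ℕ, ∀ s ∈ S, Finset (Finset ℕ)) :=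
  ((range n).powerset.filter (0 ∈ ·)).sigma fun S => S.pi fun s => NC #(gap n S s)

lemma mem_firstBlockData {n : ℕ} {x : Σ S : Finset ℕ, ∀ s ∈ S, Finset (Finset ℕ)} :
    x ∈ firstBlockData n ↔
      (x.1 ⊆ range n ∧ 0 ∈ x.1) ∧ ∀ s (hs : s ∈ x.1), x.2 s hs ∈ NC #(gap n x.1 s) := by
  rw [firstBlockData, mem_sigma, mem_filter, mem_powerset, mem_pi]

lemma splitAtFirstBlock_glue {n : ℕ} {S : Finset ℕ} {q : ∀ s ∈ S, Finset (Finset ℕ)}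
    (hq : ∀ s (hs : s ∈ S), q s hs ∈ NC #(gap n S s)) (h0 : 0 ∈ S) (hSr : S ⊆ range n) :
    splitAtFirstBlock n (glue S q) = ⟨S, q⟩ := by
  have hfirst : firstBlock (glue S q) = S :=
    firstBlock_eq (glue_isPartitionOf hq h0 hSr) (mem_glue.2 (Or.inl rfl)) h0
  rw [splitAtFirstBlock, hfirst]
  refine congrArg (Sigma.mk S) (funext fun s => funext fun hs => ?_)
  have hblocks : (glue S q).filter (· ⊆ gap n S s) = (q s hs).image (shift (s + 1)) := by
    ext C
    rw [mem_filter, mem_image]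
    constructor
    · rintro ⟨hC, hCg⟩
      rcases mem_glue.1 hC with rfl | ⟨s', hs', B, hB, rfl⟩
      · exact absurd (hCg h0) zero_notMem_gap
      obtain rfl : s' = s := by
        by_contra hss
        obtain ⟨x, hx⟩ : (shift (s' + 1) B).Nonempty := ((mem_NC.1 (hq s' hs')).1.1 B hB).1.map
        exact disjoint_left.1 (disjoint_gap hs' hs hss) (shift_subset_gap_of_mem hq hB hx) (hCg hx)
      exact ⟨B, hB, rfl⟩
    · rintro ⟨B, hB, rfl⟩
      exact ⟨mem_glue.2 (Or.inr ⟨s, hs, B, hB, rfl⟩), shift_subset_gap_of_mem hq hB⟩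
  rw [hblocks, image_image]
  simp only [Function.comp_def, unshift_shift, image_id']

lemma glue_splitAtFirstBlock {n : ℕ} (hn : 0 < n) {P : Finset (Finset ℕ)} (hP : P ∈ NC n) :
    glue (splitAtFirstBlock n P).1 (splitAtFirstBlock n P).2 = P := by
  obtain ⟨hpart, -⟩ := mem_NC.1 hP
  obtain ⟨S, hSP, h0⟩ := hpart.2.2 0 (mem_range.2 hn)
  have hfirst : firstBlock P = S := firstBlock_eq hpart hSP h0
  ext C
  simp only [splitAtFirstBlock, hfirst, mem_glue, mem_image, mem_filter]
  constructor
  · rintro (rfl | ⟨s, hs, _, ⟨B, ⟨hB, hBg⟩, rfl⟩, rfl⟩)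
    · exact hSP
    · rwa [shift_unshift fun _ hj => succ_le_of_mem_gap (hBg hj)]
  · intro hC
    by_cases h0C : 0 ∈ C
    · exact Or.inl ((firstBlock_eq hpart hC h0C).symm.trans hfirst)
    have hCS : C ≠ S := fun h => h0C (h ▸ h0)
    obtain ⟨x, hx⟩ := (hpart.1 C hC).1
    have hxS : x ∉ S := disjoint_left.1 (hpart.2.1 C hC S hSP hCS) hx
    obtain ⟨s, hs, hxg⟩ := exists_mem_gap h0 (mem_range.1 ((hpart.1 C hC).2 hx)) hxS
    have hCg := subset_gap_of_isNonCrossing hP hSP h0 hs hC hCS hx hxg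
    exact Or.inr ⟨s, hs, _, ⟨C, ⟨hC, hCg⟩, rfl⟩,
      (shift_unshift fun _ hj => succ_le_of_mem_gap (hCg hj)).symm⟩

lemma splitAtFirstBlock_mem {n : ℕ} (hn : 0 < n) {P : Finset (Finset ℕ)} (hP : P ∈ NC n) :
    splitAtFirstBlock n P ∈ firstBlockData n := by
  obtain ⟨hpart, -⟩ := mem_NC.1 hP
  obtain ⟨S, hSP, h0⟩ := hpart.2.2 0 (mem_range.2 hn)
  have hfirst : firstBlock P = S := firstBlock_eq hpart hSP h0
  rw [mem_firstBlockData]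
  simp only [splitAtFirstBlock, hfirst]
  exact ⟨⟨(hpart.1 S hSP).2, h0⟩, fun s hs => unshift_gapBlocks_mem_NC hP hSP h0 hs⟩

lemma sum_NC_eq_sum_glue {M : Type*} [AddCommMonoid M] {n : ℕ} (hn : 0 < n)
    (f : Finset (Finset ℕ) → M) :
    ∑ P ∈ NC n, f P = ∑ x ∈ firstBlockData n, f (glue x.1 x.2) := by
  refine (sum_nbij' (splitAtFirstBlock n) (fun x => glue x.1 x.2)
    (fun P hP => splitAtFirstBlock_mem hn hP) (fun x hx => ?_)
    (fun P hP => glue_splitAtFirstBlock hn hP) (fun x hx => ?_) fun P hP => ?_)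
  · obtain ⟨⟨hSr, h0⟩, hq⟩ := mem_firstBlockData.1 hx
    exact glue_mem_NC hq h0 hSr
  · obtain ⟨⟨hSr, h0⟩, hq⟩ := mem_firstBlockData.1 hx
    exact splitAtFirstBlock_glue hq h0 hSr
  · rw [glue_splitAtFirstBlock hn hP]

section Moments

variable [CommRing A]

noncomputable def freeMoment (κ : Word → A) (w : Word) : A :=
  ∑ P ∈ NC w.length, ∏ B ∈ P, κ (subword w B)

lemma freeMoment_nil (κ : Word → A) : freeMoment κ [] = 1 := by
  simp [freeMoment, NC_zero]

lemma subst_freeMoment (κ : Word → A) {w : Word} (hw : w ≠ []) :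
    subst κ (freeMoment κ) w = freeMoment κ w := by
  have hn : 0 < w.length := List.length_pos_iff.2 hw
  calc subst κ (freeMoment κ) w
      = ∑ S ∈ (range w.length).powerset.filter (0 ∈ ·), κ (subword w S) *
          ∏ s ∈ S, ∑ Q ∈ NC #(gap w.length S s), ∏ B ∈ Q, κ (subword w (shift (s + 1) B)) := by
        rw [subst, if_neg hw]
        refine sum_congr rfl fun S _ => congrArg _ (prod_congr rfl fun s _ => ?_)
        rw [freeMoment, length_gapAfter]
        exact sum_congr rfl fun Q hQ => prod_congr rfl fun B hB =>
          congrArg κ (subword_gapAfter ((mem_NC.1 hQ).1.1 B hB).2)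
    _ = ∑ x ∈ firstBlockData w.length, κ (subword w x.1) *
          ∏ s ∈ x.1.attach, ∏ B ∈ x.2 s.1 s.2, κ (subword w (shift (s.1 + 1) B)) := by
        rw [firstBlockData]
        exact (sum_congr rfl fun S _ => by rw [prod_sum, mul_sum]).trans (sum_sigma' _ _ _)
    _ = freeMoment κ w := by
        rw [freeMoment, sum_NC_eq_sum_glue hn]
        refine sum_congr rfl fun x hx => ?_
        obtain ⟨⟨-, h0⟩, hq⟩ := mem_firstBlockData.1 hx
        rw [prod_glue hq h0]

lemma length_gapAfter_lt {w : Word} (hw : w ≠ []) (S : Finset ℕ) (s : ℕ) :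
    (gapAfter w S s).length < w.length := by
  have := gapEnd_le_self (n := w.length) (S := S) (s := s)
  have := List.length_pos_iff.2 hw
  rw [length_gapAfter, gap, Nat.card_Ico]
  omega

lemma subst_congr_of_length_lt (f : Word → A) {g g' : Word → A} {w : Word}
    (h : ∀ v : Word, v.length < w.length → g v = g' v) : subst f g w = subst f g' w := by
  rcases eq_or_ne w [] with rfl | hw
  · simp [subst]
  simp only [subst, if_neg hw]
  exact sum_congr rfl fun S _ => congrArg _ <| prod_congr rfl fun s _ =>
    h _ (length_gapAfter_lt hw S s)

end Moments

theorem stmt14_general [Field A] (m κ : Word → A)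
    (hm : m [] = 1) (hmc : ∀ w, m w = one w + subst κ m w)
    (w : Word) :
    m w = ∑ P ∈ NC w.length, ∏ B ∈ P, κ (subword w B) := by
  change m w = freeMoment κ w
  induction hn : w.length using Nat.strong_induction_on generalizing w with
  | _ n ih =>
  rcases eq_or_ne w [] with rfl | hw
  · rw [hm, freeMoment_nil]
  rw [hmc, one, if_neg hw, zero_add, ← subst_freeMoment κ hw]
  exact subst_congr_of_length_lt κ fun v hv => ih _ (hn ▸ hv) v rfl

/-- free moment–cumulant relations via non-crossing partitions.  If `κ ∈ G^0`
is the free cumulant series of `m ∈ G^1`, i.e., `m = 1 + κ(x m(x))`, then for every nonempty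
word `w` one has `m(w) = Σ_{π ∈ NC(|w|)} ∏_{B ∈ π} κ(w_B)`, where `w_B` is the subword of
`w` at the positions of the block `B`. -/
theorem stmt14 [Field A] [CharZero A] (m κ : Word → A)
    (hm : m [] = 1) (hκ : κ [] = 0) (hmc : ∀ w, m w = one w + subst κ m w)
    (w : Word) (hw : w ≠ []) :
    m w = ∑ P ∈ NC w.length, ∏ B ∈ P, κ (subword w B) :=
  stmt14_general m κ hm hmc w
end
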